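/- arXiv:math/0703156 — 5 statements merged into one kernel-verified Lean document; each statement's English description precedes it below -/
import Mathlib

section
/- Let P ⊆ ℝⁿ be a Delone set of finite local complexity and let φ, ψ : ℝⁿ → ℝᵐ be differentiable functions that coincide on P. If the derivative maps dφ and dψ are both strongly P-equivariant, then φ − ψ is strongly P-equivariant. -/
open Metric Set

noncomputable section

/-- Euclidean space ℝⁿ. -/
abbrev Euc (n : ℕ) := EuclideanSpace ℝ (Fin n)

/-- The translate `P - x = {p - x : p ∈ P}`. -/
def shiftSet {n : ℕ} (P : Set (Euc n)) (x : Euc n) : Set (Euc n) :=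
  (fun p => p - x) '' P

/-- The `r`-patch of `P` around `x`: `B_r[P - x] = B(0,r) ∩ (P - x)`. -/
def patch {n : ℕ} (P : Set (Euc n)) (r : ℝ) (x : Euc n) : Set (Euc n) :=
  ball (0 : Euc n) r ∩ shiftSet P x

/-- `P` is uniformly discrete: there is a positive minimal distance between points. -/
def UnifDiscrete {n : ℕ} (P : Set (Euc n)) : Prop :=
  ∃ δ > 0, ∀ p ∈ P, ∀ q ∈ P, p ≠ q → δ ≤ ‖p - q‖

/-- `P` is relatively dense: every ball of radius `R` contains a point of `P`. -/
def RelDense {n : ℕ} (P : Set (Euc n)) : Prop :=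
  ∃ R > 0, ∀ x : Euc n, ∃ p ∈ P, ‖p - x‖ < R

/-- `P` has finite local complexity: for each `r > 0`, only finitely many `r`-patches
around points of `P`. -/
def FLC {n : ℕ} (P : Set (Euc n)) : Prop :=
  ∀ r > 0, {s : Set (Euc n) | ∃ x ∈ P, s = patch P r x}.Finite

/-- `f` is `P`-equivariant with range `R`. -/
def EquivRange {n : ℕ} {F : Type*} (P : Set (Euc n)) (R : ℝ) (f : Euc n → F) : Prop :=
  ∀ x y : Euc n, patch P R x = patch P R y → f x = f y

/-- `f` is strongly `P`-equivariant: `P`-equivariant with some finite range `R > 0`. -/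
def StrongEquiv {n : ℕ} {F : Type*} (P : Set (Euc n)) (f : Euc n → F) : Prop :=
  ∃ R > 0, EquivRange P R f

/-- `f`, viewed as a function on the subset `Q`, is `P`-equivariant with range `R`. -/
def EquivRangeOn {n : ℕ} {F : Type*} (P Q : Set (Euc n)) (R : ℝ) (f : Euc n → F) : Prop :=
  ∀ x ∈ Q, ∀ y ∈ Q, patch P R x = patch P R y → f x = f y

/-- `f`, viewed as a function on the subset `Q`, is strongly `P`-equivariant. -/
def StrongEquivOn {n : ℕ} {F : Type*} (P Q : Set (Euc n)) (f : Euc n → F) : Prop :=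
  ∃ R > 0, EquivRangeOn P Q R f

/-- `Q` is locally derivable from `P`. -/
def LocallyDerivable {n : ℕ} (P Q : Set (Euc n)) : Prop :=
  ∃ R > 0, ∀ x y : Euc n, patch P R x = patch P R y →
    ({0} : Set (Euc n)) ∩ shiftSet Q x = ({0} : Set (Euc n)) ∩ shiftSet Q y

/-- Hypothesis (H): for every `r > 0` there is `r' > 0` such that for all `x`,
`B(φ(x), r) ∩ φ(P) ⊆ φ(B(x, r') ∩ P)`. -/
def HypoH {n : ℕ} (P : Set (Euc n)) (φ : Euc n → Euc n) : Prop :=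
  ∀ r > 0, ∃ r' > 0, ∀ x : Euc n, ball (φ x) r ∩ (φ '' P) ⊆ φ '' (ball x r' ∩ P)

/-- The pattern metric `D` on closed subsets of ℝⁿ. -/
def patternDist {n : ℕ} (A B : Set (Euc n)) : ℝ :=
  sInf {ε : ℝ | 0 < ε ∧ Metric.hausdorffDist
    ((ball (0 : Euc n) (1 / ε) ∩ A) ∪ sphere (0 : Euc n) (1 / ε))
    ((ball (0 : Euc n) (1 / ε) ∩ B) ∪ sphere (0 : Euc n) (1 / ε)) ≤ ε}

/-- A continuous `f : ℝⁿ → ℝⁿ` is weakly `P`-equivariant if it is uniformly approximated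
by strongly `P`-equivariant continuous functions. -/
def WeakEquiv {n : ℕ} (P : Set (Euc n)) (f : Euc n → Euc n) : Prop :=
  ∀ ε > 0, ∃ g : Euc n → Euc n, Continuous g ∧ StrongEquiv P g ∧ ∀ x : Euc n, ‖f x - g x‖ < ε

/-- `P` is aperiodic: the only translation fixing `P` is `0`. -/
def IsAperiodicSet {n : ℕ} (P : Set (Euc n)) : Prop :=
  ∀ x : Euc n, shiftSet P x = P → x = 0

/-!
Write `χ = φ - ψ`; it vanishes on `P` and `dχ = dφ - dψ` is equivariant with some range `R`.
If the `(R + R_d)`-patches around `x` and `y` agree, where `R_d` is the relative-density radius,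
then the `R`-patches around `z` and `z + (y - x)` agree for every `z` in the ball `B(x, R_d)`.
So `χ` and `χ(· + (y - x))` have the same derivative on that ball, and they agree at a point
`p ∈ P` of it, because `p + (y - x) ∈ P` as well. Hence they agree on the ball, in particular
at `x`, which gives `χ x = χ y`.
-/

variable {n : ℕ} {P : Set (Euc n)}

lemma mem_patch_iff {r : ℝ} {x z : Euc n} : z ∈ patch P r x ↔ ‖z‖ < r ∧ z + x ∈ P := by
  simp [patch, shiftSet, sub_eq_iff_eq_add]

lemma patch_eq_patch_add_sub_of_patch_eq {R r : ℝ} {x y z : Euc n} (h : patch P R x = patch P R y)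
    (hz : ‖z - x‖ + r ≤ R) : patch P r z = patch P r (z + (y - x)) := by
  ext u
  simp only [mem_patch_iff]
  refine and_congr_right fun hu => ?_
  have hmem : u + (z - x) ∈ patch P R x ↔ u + (z - x) ∈ patch P R y := by rw [h]
  have hnorm : ‖u + (z - x)‖ < R := (norm_add_le _ _).trans_lt (by linarith)
  rw [mem_patch_iff, mem_patch_iff, show u + (z - x) + x = u + z by abel,
    show u + (z - x) + y = u + (z + (y - x)) by abel] at hmem
  exact ⟨fun hz => (hmem.1 ⟨hnorm, hz⟩).2, fun hz => (hmem.2 ⟨hnorm, hz⟩).2⟩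

namespace EquivRange

variable {F : Type*} {R R' : ℝ}

lemma mono {f : Euc n → F} (hf : EquivRange P R f) (hRR' : R ≤ R') : EquivRange P R' f :=
  fun x y h => by
    have := patch_eq_patch_add_sub_of_patch_eq (z := x) h (by simpa using hRR')
    exact hf x y (by simpa using this)

lemma sub [Sub F] {f g : Euc n → F} (hf : EquivRange P R f) (hg : EquivRange P R g) :
    EquivRange P R (fun x => f x - g x) :=
  fun x y h => congrArg₂ (· - ·) (hf x y h) (hg x y h)

end EquivRange

lemma equivRange_add_of_fderiv {F : Type*} [NormedAddCommGroup F] [NormedSpace ℝ F]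
    {f : Euc n → F} {R Rd : ℝ} (hR : 0 ≤ R) (hdense : ∀ x, ∃ p ∈ P, ‖p - x‖ < Rd)
    (hf : Differentiable ℝ f) (hP : ∀ p ∈ P, f p = 0) (hdf : EquivRange P R (fderiv ℝ f)) : EquivRange P (R + Rd) f := by
  intro x y hxy
  obtain ⟨p, hp, hpx⟩ := hdense x
  have hpy : p + (y - x) ∈ P := by
    have hx : p - x ∈ patch P (R + Rd) x := by
      rw [mem_patch_iff, sub_add_cancel]
      exact ⟨by linarith, hp⟩
    have hy := (mem_patch_iff.1 (hxy ▸ hx)).2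
    rwa [sub_add_eq_add_sub, add_sub_assoc] at hy
  have hshift : ∀ z ∈ ball x Rd, fderiv ℝ f z = fderiv ℝ (fun z => f (z + (y - x))) z := by
    intro z hz
    rw [fderiv_comp_add_right]
    exact hdf z _ (patch_eq_patch_add_sub_of_patch_eq hxy (by rw [mem_ball, dist_eq_norm] at hz; linarith))
  have hball := isOpen_ball.eqOn_of_fderiv_eq (g := fun z => f (z + (y - x)))
    (convex_ball x Rd).isPreconnected
    hf.differentiableOn (hf.comp (differentiable_id.add_const _)).differentiableOn hshift
    (by rwa [mem_ball, dist_eq_norm]) (by rw [hP p hp, hP _ hpy])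
  simpa using hball (mem_ball_self (by linarith [norm_nonneg (p - x)]))

theorem stmt0_general {n m : ℕ} (P : Set (Euc n))
    (hRD : RelDense P)
    (φ ψ : Euc n → Euc m)
    (hφ : Differentiable ℝ φ) (hψ : Differentiable ℝ ψ)
    (hcoin : ∀ p ∈ P, φ p = ψ p)
    (hdφ : StrongEquiv P (fderiv ℝ φ)) (hdψ : StrongEquiv P (fderiv ℝ ψ)) :
    StrongEquiv P (fun x => φ x - ψ x) := by
  obtain ⟨R₀, hR₀, hφ'⟩ := hdφ
  obtain ⟨R₁, -, hψ'⟩ := hdψ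
  obtain ⟨Rd, hRd, hdense⟩ := hRD
  have hderiv : fderiv ℝ (fun x => φ x - ψ x) = fun x => fderiv ℝ φ x - fderiv ℝ ψ x :=
    funext fun x => fderiv_fun_sub (hφ x) (hψ x)
  refine ⟨max R₀ R₁ + Rd, by positivity, equivRange_add_of_fderiv
    (le_max_of_le_left hR₀.le) hdense (hφ.sub hψ)
    (fun p hp => sub_eq_zero.2 (hcoin p hp)) ?_⟩
  rw [hderiv]
  exact (hφ'.mono (le_max_left _ _)).sub (hψ'.mono (le_max_right _ _))

theorem stmt0 {n m : ℕ} (P : Set (Euc n))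
    (hUD : UnifDiscrete P) (hRD : RelDense P) (hFLC : FLC P)
    (φ ψ : Euc n → Euc m)
    (hφ : Differentiable ℝ φ) (hψ : Differentiable ℝ ψ)
    (hcoin : ∀ p ∈ P, φ p = ψ p)
    (hdφ : StrongEquiv P (fderiv ℝ φ)) (hdψ : StrongEquiv P (fderiv ℝ ψ)) :
    StrongEquiv P (fun x => φ x - ψ x) :=
  stmt0_general P hRD φ ψ hφ hψ hcoin hdφ hdψ
end
end

section
/- Let P ⊆ ℝⁿ be a uniformly discrete set of finite local complexity and let φ : ℝⁿ → ℝⁿ be a differentiable function which satisfies Hypothesis (H) for P and whose derivative map dφ is strongly P-equivariant. Then φ(P) has finite local complexity, i.e. for every r > 0 the collection of sets {B_r[φ(P) − z] : z ∈ φ(P)} is finite. -/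
open Metric Set

noncomputable section

/-!
Let `dφ` be `P`-equivariant with range `R`, and let `r'` be given by (H) for `r`.
If the `(R + r')`-patches of `P` at `p` and `q` agree, then `dφ` agrees at `p + v` and `q + v`
for `‖v‖ < r'`, so `v ↦ φ (p + v) - φ p` and `v ↦ φ (q + v) - φ q` coincide on the ball of
radius `r'`. By (H), the `r`-patch of `φ(P)` at `φ p` is the image of the `r'`-patch of `P` at `p`
under this increment map; hence it depends only on the `(R + r')`-patch of `P` at `p`, of which
there are finitely many.
-/

theorem Set.Finite.image_of_factors {α β γ : Type*} {S : Set α} {f : α → β} {g : α → γ}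
    (hf : (f '' S).Finite) (hg : ∀ a ∈ S, ∀ b ∈ S, f a = f b → g a = g b) :
    (g '' S).Finite := by
  classical
  obtain rfl | ⟨a₀, -⟩ := S.eq_empty_or_nonempty
  · simp
  have : Nonempty α := ⟨a₀⟩
  refine hf.of_surjOn (g ∘ Function.invFunOn f S) ?_
  rintro _ ⟨a, ha, rfl⟩
  have hex : ∃ b ∈ S, f b = f a := ⟨a, ha, rfl⟩
  exact ⟨f a, mem_image_of_mem f ha,
    hg _ (Function.invFunOn_mem hex) _ ha (Function.invFunOn_eq hex)⟩

theorem IsOpen.sub_eq_sub_of_fderiv_eq_fderiv_add {𝕜 E G : Type*}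
    [NontriviallyNormedField 𝕜] [IsRCLikeNormedField 𝕜] [NormedAddCommGroup E]
    [NormedSpace ℝ E] [NormedSpace 𝕜 E] [NormedAddCommGroup G] [NormedSpace 𝕜 G]
    {φ : E → G} (hφ : Differentiable 𝕜 φ) {s : Set E} (hs : IsOpen s) (hs' : IsPreconnected s)
    {c : E} (hd : ∀ x ∈ s, fderiv 𝕜 φ x = fderiv 𝕜 φ (x + c)) {x y : E}
    (hx : x ∈ s) (hy : y ∈ s) :
    φ y - φ x = φ (y + c) - φ (x + c) := by
  obtain ⟨a, ha⟩ := hs.exists_eq_add_of_fderiv_eq hs' hφ.differentiableOn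
    (hφ.comp (differentiable_id.add_const c)).differentiableOn
    fun z hz => (hd z hz).trans (fderiv_comp_add_right c).symm
  have hx' : φ x = φ (x + c) + a := ha hx
  have hy' : φ y = φ (y + c) + a := ha hy
  rw [hx', hy']
  abel

section Patch

variable {n : ℕ} {P : Set (Euc n)}

theorem mem_patch {r : ℝ} {x u : Euc n} : u ∈ patch P r x ↔ ‖u‖ < r ∧ u + x ∈ P := by
  simp only [patch, shiftSet, mem_inter_iff, mem_ball, dist_zero_right, mem_image,
    sub_eq_iff_eq_add]
  exact and_congr_right fun _ => ⟨by rintro ⟨p, hp, rfl⟩; exact hp, fun h => ⟨_, h, rfl⟩⟩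

theorem flc_iff : FLC P ↔ ∀ r > 0, (patch P r '' P).Finite := by
  simp only [FLC, image, eq_comm]

theorem patch_eq_patch_of_le {s t : ℝ} (hst : s ≤ t) {x y : Euc n}
    (h : patch P t x = patch P t y) : patch P s x = patch P s y := by
  ext u
  have hu := Set.ext_iff.mp h u
  simp only [mem_patch] at hu ⊢
  exact and_congr_right fun hs => by simpa [hs.trans_le hst] using hu

theorem patch_add_eq_patch_add {R r' : ℝ} {x y w : Euc n} (hw : ‖w‖ < r')
    (h : patch P (R + r') x = patch P (R + r') y) :
    patch P R (x + w) = patch P R (y + w) := by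
  ext u
  have hu := Set.ext_iff.mp h (u + w)
  simp only [mem_patch, add_assoc, add_comm x w, add_comm y w] at hu ⊢
  exact and_congr_right fun huR =>
    by simpa [(norm_add_le u w).trans_lt (add_lt_add huR hw)] using hu

variable {φ : Euc n → Euc n}

theorem EquivRange.sub_eq_sub_of_patch_eq (hφ : Differentiable ℝ φ) {R r' : ℝ}
    (hEq : EquivRange P R (fderiv ℝ φ)) {x y v : Euc n} (hv : ‖v‖ < r')
    (h : patch P (R + r') x = patch P (R + r') y) :
    φ (x + v) - φ x = φ (y + v) - φ y := by
  have hd : ∀ z ∈ ball x r', fderiv ℝ φ z = fderiv ℝ φ (z + (y - x)) := by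
    intro z hz
    convert hEq _ _ (patch_add_eq_patch_add (w := z - x) (by rwa [← dist_eq_norm]) h) using 2
      <;> abel
  have hxv : x + v ∈ ball x r' := mem_ball_iff_norm.mpr (by rwa [add_sub_cancel_left])
  have := isOpen_ball.sub_eq_sub_of_fderiv_eq_fderiv_add hφ (convex_ball x r').isPreconnected hd
    (mem_ball_self ((norm_nonneg v).trans_lt hv)) hxv
  rwa [add_sub_cancel, add_right_comm x v, add_sub_cancel] at this

theorem patch_image_eq_image_patch {r r' : ℝ}
    (hH : ∀ x : Euc n, ball (φ x) r ∩ (φ '' P) ⊆ φ '' (ball x r' ∩ P)) (p : Euc n) :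
    patch (φ '' P) r (φ p) = ball 0 r ∩ ((fun v => φ (p + v) - φ p) '' patch P r' p) := by
  ext y
  constructor
  · intro hy
    have hy' := mem_patch.mp hy
    have hmem : y + φ p ∈ ball (φ p) r ∩ (φ '' P) :=
      ⟨by simpa [dist_eq_norm] using hy'.1, hy'.2⟩
    obtain ⟨q, ⟨hq, hqP⟩, hqy⟩ := hH p hmem
    refine ⟨by simpa using hy'.1, q - p, mem_patch.mpr ⟨?_, by simpa using hqP⟩, ?_⟩
    · simpa [dist_eq_norm] using hq
    · simp [hqy]
  · rintro ⟨hy, v, hv, rfl⟩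
    refine mem_patch.mpr ⟨by simpa using hy, ?_⟩
    rw [sub_add_cancel]
    exact mem_image_of_mem φ (by simpa [add_comm] using (mem_patch.mp hv).2)

theorem patch_image_eq_of_patch_eq (hφ : Differentiable ℝ φ) {R r r' : ℝ} (hR : 0 ≤ R)
    (hEq : EquivRange P R (fderiv ℝ φ))
    (hH : ∀ x : Euc n, ball (φ x) r ∩ (φ '' P) ⊆ φ '' (ball x r' ∩ P)) {x y : Euc n}
    (h : patch P (R + r') x = patch P (R + r') y) :
    patch (φ '' P) r (φ x) = patch (φ '' P) r (φ y) := by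
  rw [patch_image_eq_image_patch hH, patch_image_eq_image_patch hH,
    patch_eq_patch_of_le (by linarith) h]
  congr 1
  exact image_congr fun v hv => hEq.sub_eq_sub_of_patch_eq hφ (mem_patch.mp hv).1 h

end Patch

theorem stmt8_general {n : ℕ} (P : Set (Euc n)) (hFLC : FLC P)
    (φ : Euc n → Euc n) (hφ : Differentiable ℝ φ)
    (hH : HypoH P φ) (hdφ : StrongEquiv P (fderiv ℝ φ)) :
    FLC (φ '' P) := by
  rw [flc_iff] at hFLC ⊢
  intro r hr
  obtain ⟨R, hR, hEq⟩ := hdφ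
  obtain ⟨r', hr', hH'⟩ := hH r hr
  rw [image_image]
  exact (hFLC (R + r') (by positivity)).image_of_factors
    fun x _ y _ h => patch_image_eq_of_patch_eq hφ hR.le hEq hH' h

theorem stmt8 {n : ℕ} (P : Set (Euc n)) (hUD : UnifDiscrete P) (hFLC : FLC P)
    (φ : Euc n → Euc n) (hφ : Differentiable ℝ φ)
    (hH : HypoH P φ) (hdφ : StrongEquiv P (fderiv ℝ φ)) :
    FLC (φ '' P) :=
  stmt8_general P hFLC φ hφ hH hdφ
end
end

section
/- Let P ⊆ ℝⁿ be a uniformly discrete set of finite local complexity and let φ : ℝⁿ → ℝⁿ be a differentiable function whose derivative map dφ is strongly P-equivariant. If x ∈ ℝⁿ satisfies P − x = P, then φ(P) − φ(x) = φ(P) − φ(0). -/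
open Metric Set

noncomputable section

/-! A translation `x` fixing `P` fixes every patch of `P`, so the strongly `P`-equivariant
derivative `dφ` is `x`-periodic. Hence `y ↦ φ (x + y) - φ y` has zero derivative and equals
its value `φ x - φ 0` at `0`: on `P = x + P` the map `φ` intertwines translation by `x` with
translation by `φ x - φ 0`, which is the claim. -/

theorem Differentiable.apply_add_left_sub_eq_of_fderiv {E F : Type*} [NormedAddCommGroup E]
    [NormedSpace ℝ E] [NormedAddCommGroup F] [NormedSpace ℝ F] {φ : E → F}
    (hφ : Differentiable ℝ φ) {x : E} (hper : ∀ y, fderiv ℝ φ (x + y) = fderiv ℝ φ y) (y : E) :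
    φ (x + y) - φ y = φ x - φ 0 := by
  have hshift : Differentiable ℝ fun y ↦ φ (x + y) := by fun_prop
  have hzero : ∀ y, fderiv ℝ (fun y ↦ φ (x + y) - φ y) y = 0 := fun y ↦ by
    rw [fderiv_fun_sub (hshift y) (hφ y), fderiv_comp_add_left, hper, sub_self]
  simpa only [add_zero] using
    is_const_of_fderiv_eq_zero (f := fun y ↦ φ (x + y) - φ y) (hshift.sub hφ) hzero y 0

section

variable {n : ℕ} {P : Set (Euc n)} {x : Euc n}

theorem shiftSet_add (P : Set (Euc n)) (x y : Euc n) :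
    shiftSet P (x + y) = shiftSet (shiftSet P x) y := by
  simp only [shiftSet, image_image, sub_add_eq_sub_sub]

theorem image_add_left_eq_of_shiftSet_eq (hx : shiftSet P x = P) : (x + ·) '' P = P := by
  conv_lhs => rw [← hx]
  simp only [shiftSet, image_image, add_sub_cancel, image_id']

theorem patch_add_left_of_shiftSet_eq (hx : shiftSet P x = P) (r : ℝ) (y : Euc n) :
    patch P r (x + y) = patch P r y := by
  rw [patch, shiftSet_add, hx, patch]

theorem EquivRange.apply_add_left_of_shiftSet_eq {F : Type*} {R : ℝ} {f : Euc n → F}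
    (hf : EquivRange P R f) (hx : shiftSet P x = P) (y : Euc n) : f (x + y) = f y :=
  hf _ _ (patch_add_left_of_shiftSet_eq hx R y)

theorem shiftSet_image_eq_of_apply_add_left_sub_eq {φ : Euc n → Euc n}
    (hx : (x + ·) '' P = P) (hφ : ∀ y, φ (x + y) - φ y = φ x - φ 0) :
    shiftSet (φ '' P) (φ x) = shiftSet (φ '' P) (φ 0) := by
  conv_lhs => rw [← hx]
  simp only [shiftSet, image_image]
  refine image_congr fun p _ ↦ ?_
  linear_combination (norm := abel_nf) hφ p

end

theorem stmt9_general {n : ℕ} (P : Set (Euc n))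
    (φ : Euc n → Euc n) (hφ : Differentiable ℝ φ)
    (hdφ : StrongEquiv P (fderiv ℝ φ))
    (x : Euc n) (hx : shiftSet P x = P) :
    shiftSet (φ '' P) (φ x) = shiftSet (φ '' P) (φ 0) := by
  obtain ⟨R, -, hR⟩ := hdφ
  exact shiftSet_image_eq_of_apply_add_left_sub_eq (image_add_left_eq_of_shiftSet_eq hx)
    (hφ.apply_add_left_sub_eq_of_fderiv (hR.apply_add_left_of_shiftSet_eq hx))

theorem stmt9 {n : ℕ} (P : Set (Euc n)) (hUD : UnifDiscrete P) (hFLC : FLC P)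
    (φ : Euc n → Euc n) (hφ : Differentiable ℝ φ)
    (hdφ : StrongEquiv P (fderiv ℝ φ))
    (x : Euc n) (hx : shiftSet P x = P) :
    shiftSet (φ '' P) (φ x) = shiftSet (φ '' P) (φ 0) :=
  stmt9_general P φ hφ hdφ x hx
end
end

section
/- Let P ⊆ ℝⁿ be a Delone set of finite local complexity, let φ : ℝⁿ → ℝⁿ be a function, and let g be an invertible linear map of ℝⁿ. If φ − g is strongly P-equivariant, then φ(P) is a Delone set (uniformly discrete and relatively dense). -/
open Metric Set

noncomputable section

open Bornology
open scoped Pointwise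

/-!
Write `φ = g + h` with `h := φ - g`. Finite local complexity and the equivariance of `h` make
`h` take only finitely many values on `P`; in particular `h` is bounded there, so `φ(P)` stays
within bounded distance of the relatively dense set `g(P)`. For uniform discreteness, a short
difference `φ p - φ q = g (p - q) + h p - h q` forces `p - q` into a bounded set, where `P` has
only finitely many differences by finite local complexity; so the short differences of `φ(P)`
form a finite set, and a finite set of nonzero vectors stays away from `0`.
-/

section Delone

variable {n : ℕ} {P : Set (Euc n)}

lemma UnifDiscrete.isDiscrete (hP : UnifDiscrete P) : IsDiscrete P := by
  obtain ⟨δ, hδ, hsep⟩ := hP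
  refine isDiscrete_iff_forall_mem_exists_isOpen.2 fun p hp => ⟨ball p δ, isOpen_ball, ?_⟩
  refine subset_antisymm (fun q ⟨hqp, hq⟩ => ?_) (singleton_subset_iff.2 ⟨mem_ball_self hδ, hp⟩)
  by_contra hne
  exact (hsep q hq p hp hne).not_gt (mem_ball_iff_norm.1 hqp)

lemma UnifDiscrete.isClosed (hP : UnifDiscrete P) : IsClosed P := by
  obtain ⟨δ, hδ, hsep⟩ := hP
  exact isClosed_of_pairwise_le_dist hδ fun p hp q hq hpq =>
    (hsep p hp q hq hpq).trans_eq (dist_eq_norm p q).symm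

lemma UnifDiscrete.finite_isBounded_inter (hP : UnifDiscrete P) {K : Set (Euc n)}
    (hK : IsBounded K) : (K ∩ P).Finite :=
  finite_isBounded_inter_isClosed hP.isDiscrete hK hP.isClosed

lemma finite_sub_inter_of_flc (hUD : UnifDiscrete P) (hFLC : FLC P) {K : Set (Euc n)}
    (hK : IsBounded K) : ((P - P) ∩ K).Finite := by
  obtain ⟨r, hr, hKr⟩ := hK.subset_ball_lt 0 0
  have hpatch : ∀ x, (patch P r x).Finite := fun x =>
    ((hUD.finite_isBounded_inter (isBounded_ball (x := x) (r := r))).image (· - x)).subset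
      (by rintro _ ⟨hv, p, hp, rfl⟩; exact ⟨p, ⟨by simpa [dist_eq_norm] using hv, hp⟩, rfl⟩)
  refine ((hFLC r hr).sUnion ?_).subset ?_
  · rintro _ ⟨x, -, rfl⟩
    exact hpatch x
  · rintro _ ⟨⟨p, hp, q, hq, rfl⟩, hpq⟩
    exact ⟨patch P r q, ⟨q, hq, rfl⟩, hKr hpq, p, hp, rfl⟩

lemma unifDiscrete_of_finite_sub_inter_ball {S : Set (Euc n)} {r : ℝ} (hr : 0 < r)
    (hS : ((S - S) ∩ ball 0 r).Finite) : UnifDiscrete S := by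
  obtain ⟨ε, hε, hball⟩ :=
    Metric.isOpen_iff.1 (hS.sdiff (t := {0})).isClosed.isOpen_compl 0 (by simp)
  refine ⟨min ε r, lt_min hε hr, fun p hp q hq hpq => ?_⟩
  by_contra! hlt
  rw [lt_min_iff] at hlt
  have hsmall : p - q ∈ ((S - S) ∩ ball 0 r) \ {0} :=
    ⟨⟨sub_mem_sub hp hq, mem_ball_zero_iff.2 hlt.2⟩, sub_ne_zero.2 hpq⟩
  exact hball (mem_ball_zero_iff.2 hlt.1) hsmall

lemma EquivRange.finite_image (hFLC : FLC P) {R : ℝ} (hR : 0 < R) {F : Type*} {f : Euc n → F}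
    (hf : EquivRange P R f) : (f '' P).Finite := by
  refine ((hFLC R hR).biUnion (t := fun s => f '' {x | x ∈ P ∧ patch P R x = s})
    fun s _ => Subsingleton.finite ?_).subset ?_
  · rintro _ ⟨x, ⟨-, hx⟩, rfl⟩ _ ⟨y, ⟨-, hy⟩, rfl⟩
    exact hf x y (hx.trans hy.symm)
  · rintro _ ⟨x, hx, rfl⟩
    exact mem_biUnion ⟨x, hx, rfl⟩ ⟨x, ⟨hx, rfl⟩, rfl⟩

lemma RelDense.image_of_lipschitzWith (hP : RelDense P) {f : Euc n → Euc n} {K : NNReal}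
    (hf : LipschitzWith K f) (hsurj : Function.Surjective f) : RelDense (f '' P) := by
  obtain ⟨R, hR, hdense⟩ := hP
  refine ⟨K * R + 1, by positivity, fun y => ?_⟩
  obtain ⟨x, rfl⟩ := hsurj y
  obtain ⟨p, hp, hpx⟩ := hdense x
  refine ⟨f p, mem_image_of_mem f hp, ?_⟩
  calc ‖f p - f x‖ ≤ K * ‖p - x‖ := by simpa only [dist_eq_norm] using hf.dist_le_mul p x
  _ ≤ K * R := by gcongr
  _ < K * R + 1 := lt_add_one _

lemma RelDense.image_of_isBounded_sub {φ ψ : Euc n → Euc n} (hψ : RelDense (ψ '' P))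
    (hb : IsBounded ((fun x => φ x - ψ x) '' P)) : RelDense (φ '' P) := by
  obtain ⟨R, hR, hdense⟩ := hψ
  obtain ⟨M, hM, hbound⟩ := hb.exists_pos_norm_le
  refine ⟨R + M, by positivity, fun y => ?_⟩
  obtain ⟨_, ⟨p, hp, rfl⟩, hpy⟩ := hdense y
  refine ⟨φ p, mem_image_of_mem φ hp, ?_⟩
  calc ‖φ p - y‖ = ‖(ψ p - y) + (φ p - ψ p)‖ := by abel_nf
  _ ≤ ‖ψ p - y‖ + ‖φ p - ψ p‖ := norm_add_le _ _
  _ < R + M := add_lt_add_of_lt_of_le hpy (hbound _ (mem_image_of_mem _ hp))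

lemma UnifDiscrete.image_of_finite_image_sub (hUD : UnifDiscrete P) (hFLC : FLC P)
    {φ : Euc n → Euc n} (g : Euc n ≃ₗ[ℝ] Euc n) (hH : ((fun x => φ x - g x) '' P).Finite) :
    UnifDiscrete (φ '' P) := by
  obtain ⟨M, -, hM⟩ := hH.isBounded.exists_pos_norm_le
  have hK : IsBounded (g ⁻¹' ball 0 (2 * M + 1)) := by
    simpa using g.toContinuousLinearEquiv.antilipschitz.isBounded_preimage isBounded_ball
  have hdiff := (finite_sub_inter_of_flc hUD hFLC hK).prod (hH.prod hH)
  refine unifDiscrete_of_finite_sub_inter_ball one_pos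
    ((hdiff.image fun t => g t.1 + t.2.1 - t.2.2).subset ?_)
  rintro _ ⟨⟨_, ⟨p, hp, rfl⟩, _, ⟨q, hq, rfl⟩, rfl⟩, hsmall⟩
  have hpq : p - q ∈ g ⁻¹' ball 0 (2 * M + 1) := by
    have hp' := hM _ (mem_image_of_mem _ hp)
    have hq' := hM _ (mem_image_of_mem _ hq)
    have hsmall' : ‖φ p - φ q‖ < 1 := mem_ball_zero_iff.1 hsmall
    rw [mem_preimage, mem_ball_zero_iff]
    calc ‖g (p - q)‖ = ‖(φ p - φ q) - (φ p - g p) + (φ q - g q)‖ := by rw [map_sub]; abel_nf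
    _ ≤ ‖φ p - φ q‖ + ‖φ p - g p‖ + ‖φ q - g q‖ := (norm_add_le _ _).trans
        (add_le_add_left (norm_sub_le _ _) _)
    _ < 2 * M + 1 := by linarith
  refine ⟨(p - q, φ p - g p, φ q - g q),
    ⟨⟨sub_mem_sub hp hq, hpq⟩, mem_image_of_mem _ hp, mem_image_of_mem _ hq⟩, ?_⟩
  simp only [map_sub]
  abel

end Delone

theorem stmt12 {n : ℕ} (P : Set (Euc n))
    (hUD : UnifDiscrete P) (hRD : RelDense P) (hFLC : FLC P)
    (φ : Euc n → Euc n) (g : Euc n ≃ₗ[ℝ] Euc n)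
    (hs : StrongEquiv P (fun x => φ x - g x)) :
    UnifDiscrete (φ '' P) ∧ RelDense (φ '' P) := by
  obtain ⟨R, hR, hequiv⟩ := hs
  have hH : ((fun x => φ x - g x) '' P).Finite := hequiv.finite_image hFLC hR
  have hgP : RelDense (g '' P) :=
    hRD.image_of_lipschitzWith (LinearMap.toContinuousLinearMap g.toLinearMap).lipschitz
      g.surjective
  exact ⟨hUD.image_of_finite_image_sub hFLC g hH, hgP.image_of_isBounded_sub hH.isBounded⟩
end
end

section
/- Let P ⊆ ℝⁿ be a uniformly discrete set which is aperiodic, i.e. P − x = P implies x = 0. Then for every M > 0 there exists r > 0 such that for all h ∈ ℝⁿ with |h| ≤ M: B_r[P] = B_r[P − h] implies h = 0. -/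
open Metric Set

noncomputable section

/-!
Fix `p₀ ∈ P`. Once `r > ‖p₀‖`, the equality `B_r[P] = B_r[P - h]` forces `p₀ + h ∈ P`, so `h`
lies in `(P - p₀) ∩ closedBall 0 M`, which is finite by uniform discreteness. No nonzero `h` in
this finite set is a period, so `P` and `P - h` differ at some point; a radius beyond all these
finitely many points separates the patches.
-/

open Filter

variable {n : ℕ} {P : Set (Euc n)}

@[simp]
lemma mem_shiftSet {x q : Euc n} : q ∈ shiftSet P x ↔ q + x ∈ P := by
  simp [shiftSet, sub_eq_iff_eq_add]

@[simp]
lemma shiftSet_zero : shiftSet P 0 = P := by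
  simp [shiftSet]

lemma UnifDiscrete.shiftSet (hP : UnifDiscrete P) (x : Euc n) : UnifDiscrete (shiftSet P x) := by
  obtain ⟨δ, hδ, hsep⟩ := hP
  refine ⟨δ, hδ, ?_⟩
  rintro _ ⟨p, hp, rfl⟩ _ ⟨q, hq, rfl⟩ hpq
  rw [sub_sub_sub_cancel_right]
  exact hsep p hp q hq (by rintro rfl; exact hpq rfl)

lemma UnifDiscrete.finite_inter (hP : UnifDiscrete P) {K : Set (Euc n)} (hK : TotallyBounded K) :
    (P ∩ K).Finite := by
  obtain ⟨δ, hδ, hsep⟩ := hP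
  obtain ⟨t, ht, hcover⟩ := Metric.totallyBounded_iff.1 hK (δ / 2) (by positivity)
  have hsub : ∀ y, (P ∩ ball y (δ / 2)).Subsingleton := by
    rintro y p ⟨hp, hpy⟩ q ⟨hq, hqy⟩
    by_contra hpq
    have := dist_triangle_right p q y
    rw [dist_eq_norm] at this
    linarith [hsep p hp q hq hpq, mem_ball.1 hpy, mem_ball.1 hqy]
  refine (ht.biUnion fun y _ => (hsub y).finite).subset fun p ⟨hp, hpK⟩ => ?_
  obtain ⟨y, hy, hpy⟩ := mem_iUnion₂.1 (hcover hpK)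
  exact mem_iUnion₂.2 ⟨y, hy, hp, hpy⟩

lemma eventually_patch_ne {x y : Euc n} (hxy : shiftSet P x ≠ shiftSet P y) :
    ∀ᶠ r in atTop, patch P r x ≠ patch P r y := by
  obtain ⟨q, hq⟩ : ∃ q, ¬(q ∈ shiftSet P x ↔ q ∈ shiftSet P y) :=
    not_forall.1 fun h => hxy (Set.ext h)
  filter_upwards [eventually_gt_atTop ‖q‖] with r hr heq
  have hmem := congrArg (q ∈ ·) heq
  simp only [patch, mem_inter_iff, mem_ball_zero_iff, hr, true_and] at hmem
  exact hq (Iff.of_eq hmem)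

lemma IsAperiodicSet.eventually_patch_ne (hP : IsAperiodicSet P) {h : Euc n} (hh : h ≠ 0) :
    ∀ᶠ r in atTop, patch P r 0 ≠ patch P r h :=
  _root_.eventually_patch_ne fun hper => hh (hP h (by rw [← hper, shiftSet_zero]))

theorem stmt13 {n : ℕ} (P : Set (Euc n))
    (hUD : UnifDiscrete P) (hAp : IsAperiodicSet P) :
    ∀ M > 0, ∃ r > 0, ∀ h : Euc n, ‖h‖ ≤ M →
      patch P r 0 = patch P r h → h = 0 := by
  intro M _
  rcases P.eq_empty_or_nonempty with rfl | ⟨p₀, hp₀⟩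
  · exact ⟨1, one_pos, fun h _ _ => hAp h (by simp [shiftSet])⟩
  have hfinite : (shiftSet P p₀ ∩ closedBall 0 M).Finite :=
    (hUD.shiftSet p₀).finite_inter (isCompact_closedBall 0 M).totallyBounded
  have hdetect : ∀ᶠ r in atTop, ∀ h ∈ shiftSet P p₀ ∩ closedBall 0 M, h ≠ 0 →
      patch P r 0 ≠ patch P r h :=
    (eventually_all_finite hfinite).2 fun _ _ =>
      eventually_imp_distrib_left.2 hAp.eventually_patch_ne
  obtain ⟨r, hr, hp₀r, hr_detect⟩ :=
    ((eventually_gt_atTop 0).and ((eventually_gt_atTop ‖p₀‖).and hdetect)).exists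
  refine ⟨r, hr, fun h hhM heq => by_contra fun hh => hr_detect h ⟨?_, ?_⟩ hh heq⟩
  · have hp₀h : p₀ ∈ patch P r h := heq ▸ ⟨mem_ball_zero_iff.2 hp₀r, by simpa using hp₀⟩
    simpa [add_comm] using hp₀h.2
  · exact mem_closedBall_zero_iff.2 hhM
end
end
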